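/- Let Φ be a regular symmetric norm. Then for all ξ, η ∈ ℓ_Φ^+: Φ(|ξ^↓_1 − η^↓_1|, |ξ^↓_2 − η^↓_2|, ...) ≤ Φ(|ξ_1 − η_1|, |ξ_2 − η_2|, ...); that is, the map ξ ↦ ξ^↓ from ℓ_Φ^+ to ℓ_Φ is 1-Lipschitz. -/

import Mathlib

open Filter

/-- A symmetric norm: a norm on the space `c_00` of finitely supported real
sequences (modelled as `ℕ →₀ ℝ`), normalised by `Φ(1,0,0,…) = 1`, and invariant
under permutations of the entries and under replacing entries by their absolute
values. -/
structure SymmetricNorm where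
  toFun : (ℕ →₀ ℝ) → ℝ
  nonneg : ∀ ξ, 0 ≤ toFun ξ
  eq_zero : ∀ ξ, toFun ξ = 0 → ξ = 0
  add_le : ∀ ξ η, toFun (ξ + η) ≤ toFun ξ + toFun η
  smul_eq : ∀ (c : ℝ) (ξ), toFun (c • ξ) = |c| * toFun ξ
  norm_single : toFun (Finsupp.single 0 1) = 1
  perm_invariant : ∀ (π : Equiv.Perm ℕ) (ξ), toFun (Finsupp.equivMapDomain π ξ) = toFun ξ
  abs_invariant : ∀ (ξ : ℕ →₀ ℝ), toFun (Finsupp.mapRange (fun a => |a|) abs_zero ξ) = toFun ξ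

/-- The truncation `(ξ_0, …, ξ_{n-1}, 0, 0, …)` of a sequence, as an element of `c_00`. -/
noncomputable def truncF (ξ : ℕ → ℝ) (n : ℕ) : ℕ →₀ ℝ :=
  ∑ i ∈ Finset.range n, Finsupp.single i (ξ i)

/-- The extension of a symmetric norm to sequences: `Φ(ξ) = lim_n Φ(ξ_0,…,ξ_{n-1},0,0,…)`. -/
noncomputable def SymmetricNorm.ext (Φ : SymmetricNorm) (ξ : ℕ → ℝ) : ℝ :=
  limUnder atTop fun n => Φ.toFun (truncF ξ n)

/-- Membership in the natural domain `ℓ_Φ`: the sequence tends to `0` and the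
`Φ`-norms of its truncations converge. -/
def MemLPhi (Φ : SymmetricNorm) (ξ : ℕ → ℝ) : Prop :=
  Tendsto ξ atTop (nhds 0) ∧ ∃ L, Tendsto (fun n => Φ.toFun (truncF ξ n)) atTop (nhds L)

/-- Membership in `ℓ_Φ^+`: nonnegative `Φ`-summable sequences. -/
def MemLPhiPlus (Φ : SymmetricNorm) (ξ : ℕ → ℝ) : Prop :=
  (∀ i, 0 ≤ ξ i) ∧ MemLPhi Φ ξ

/-- A symmetric norm is regular if `Φ(ξ_{n+1}, ξ_{n+2}, …) → 0` for every `ξ ∈ ℓ_Φ`. -/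
def SymmetricNorm.Regular (Φ : SymmetricNorm) : Prop :=
  ∀ ξ : ℕ → ℝ, MemLPhi Φ ξ →
    Tendsto (fun n => Φ.ext fun i => ξ (n + i)) atTop (nhds 0)

/-- `partialMax ξ k` is the supremum of sums of `k` distinct entries of `ξ`;
for nonnegative `ξ ∈ c_0` this equals `ξ^↓_1 + ⋯ + ξ^↓_k`. -/
noncomputable def partialMax (ξ : ℕ → ℝ) (k : ℕ) : ℝ :=
  sSup ((fun s : Finset ℕ => ∑ i ∈ s, ξ i) '' {s | s.card = k})

/-- The nonincreasing rearrangement `ξ^↓` of a (nonnegative, null) sequence,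
defined via `ξ^↓_1 = max ξ_i`, `ξ^↓_1 + ξ^↓_2 = max_{i ≠ j} (ξ_i + ξ_j)`, …. -/
noncomputable def decRearr (ξ : ℕ → ℝ) (k : ℕ) : ℝ :=
  partialMax ξ (k + 1) - partialMax ξ k

/-! For finitely supported nonnegative `x` and `y`, permute both by a permutation sorting `x`.
Sorting the entries of the permuted `y` by transpositions then turns `x - y` into `x^↓ - y^↓`.
Each transposition that puts two entries of `y` into the same order as the corresponding entries
of `x` replaces two entries of the difference by values between them with the same sum. The new
vector is a convex combination of the old one and its transposed copy, so its symmetric norm is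
no larger. General sequences are handled by truncation: `ξ^↓_k` is the limit of the
rearrangements of the truncations, because the partial sums of `ξ^↓` are suprema of sums over
finite index sets. -/

open Topology Finset

theorem truncF_apply (f : ℕ → ℝ) (n i : ℕ) : truncF f n i = if i < n then f i else 0 := by
  classical
  simp [truncF, Finsupp.finsetSum_apply, Finsupp.single_apply]

theorem truncF_add (f g : ℕ → ℝ) (n : ℕ) : truncF (f + g) n = truncF f n + truncF g n := by
  simp only [truncF, Pi.add_apply, Finsupp.single_add, sum_add_distrib]

theorem truncF_sub (f g : ℕ → ℝ) (n : ℕ) : truncF (f - g) n = truncF f n - truncF g n := by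
  simp only [truncF, Pi.sub_apply, Finsupp.single_sub, sum_sub_distrib]

theorem truncF_smul (c : ℝ) (f : ℕ → ℝ) (n : ℕ) : truncF (c • f) n = c • truncF f n := by
  simp only [truncF, Pi.smul_apply, smul_sum, Finsupp.smul_single]

theorem truncF_congr {f g : ℕ → ℝ} {n : ℕ} (h : ∀ i < n, f i = g i) : truncF f n = truncF g n :=
  sum_congr rfl fun i hi => by rw [h i (mem_range.1 hi)]

theorem Antitone.sum_le_sum_range_card {x : ℕ → ℝ} (hx : Antitone x) (s : Finset ℕ) :
    ∑ i ∈ s, x i ≤ ∑ i ∈ range #s, x i := by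
  set r := range #s
  calc ∑ i ∈ s, x i ≤ ∑ i ∈ s ∩ r, x i + #(s \ r) • x #s := by
        rw [← sum_inter_add_sum_sdiff s r]
        gcongr
        refine sum_le_card_nsmul _ _ _ fun i hi => hx ?_
        simpa [r] using (mem_sdiff.1 hi).2
    _ = ∑ i ∈ r ∩ s, x i + #(r \ s) • x #s := by
        rw [inter_comm, card_sdiff_comm (card_range _).symm]
    _ ≤ ∑ i ∈ r, x i := by
        rw [← sum_inter_add_sum_sdiff r s]
        gcongr
        refine card_nsmul_le_sum _ _ _ fun i hi => hx ?_
        exact (mem_range.1 (mem_sdiff.1 hi).1).le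

theorem partialMax_comp_perm (x : ℕ → ℝ) (π : Equiv.Perm ℕ) (k : ℕ) :
    partialMax (x ∘ π) k = partialMax x k := by
  unfold partialMax
  congr 1
  ext a
  constructor
  · rintro ⟨s, hs, rfl⟩
    exact ⟨s.map π.toEmbedding, by simpa using hs, by simp⟩
  · rintro ⟨s, hs, rfl⟩
    exact ⟨s.map π.symm.toEmbedding, by simpa using hs, by simp⟩

theorem partialMax_of_antitone {x : ℕ → ℝ} (hx : Antitone x) (k : ℕ) :
    partialMax x k = ∑ i ∈ range k, x i := by
  refine IsGreatest.csSup_eq ⟨⟨range k, card_range k, rfl⟩, ?_⟩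
  rintro _ ⟨s, rfl, rfl⟩
  exact hx.sum_le_sum_range_card s

theorem decRearr_eq_comp_of_antitone {x : ℕ → ℝ} {π : Equiv.Perm ℕ} (hx : Antitone (x ∘ π)) :
    decRearr x = x ∘ π := by
  ext k
  rw [decRearr, ← partialMax_comp_perm x π, ← partialMax_comp_perm x π, partialMax_of_antitone hx,
    partialMax_of_antitone hx, sum_range_succ, add_sub_cancel_left]

theorem le_partialMax {x : ℕ → ℝ} (hx : BddAbove (Set.range x)) (s : Finset ℕ) :
    ∑ i ∈ s, x i ≤ partialMax x #s := by
  obtain ⟨C, hC⟩ := hx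
  refine le_csSup ⟨#s • C, ?_⟩ ⟨s, rfl, rfl⟩
  rintro _ ⟨t, ht, rfl⟩
  exact ht ▸ sum_le_card_nsmul _ _ _ fun i _ => hC ⟨i, rfl⟩

theorem partialMax_mono {x y : ℕ → ℝ} (hxy : x ≤ y) (hy : BddAbove (Set.range y)) (k : ℕ) :
    partialMax x k ≤ partialMax y k := by
  refine csSup_le ⟨_, range k, card_range k, rfl⟩ ?_
  rintro _ ⟨s, rfl, rfl⟩
  exact (sum_le_sum fun i _ => hxy i).trans (le_partialMax hy s)

theorem tendsto_partialMax_truncF {x : ℕ → ℝ} (hx₀ : 0 ≤ x) (hx : BddAbove (Set.range x))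
    (k : ℕ) : Tendsto (fun m => partialMax (truncF x m) k) atTop (𝓝 (partialMax x k)) := by
  have htrunc_le : ∀ m, ⇑(truncF x m) ≤ x := fun m i => by
    rw [truncF_apply]; split_ifs; exacts [le_rfl, hx₀ i]
  have hbdd : ∀ m, BddAbove (Set.range (truncF x m)) := fun m => hx.range_mono _ (htrunc_le m)
  have hmono : Monotone fun m => partialMax (truncF x m) k := fun m m' hm =>
    partialMax_mono (fun i => by
      rw [truncF_apply, truncF_apply]; split_ifs <;> first | exact le_rfl | exact hx₀ i | omega)
      (hbdd m') k
  refine tendsto_atTop_isLUB hmono ⟨?_, fun b hb => ?_⟩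
  · rintro _ ⟨m, rfl⟩
    exact partialMax_mono (htrunc_le m) hx k
  refine csSup_le ⟨_, range k, card_range k, rfl⟩ ?_
  rintro _ ⟨s, rfl, rfl⟩
  obtain ⟨M, hM⟩ := s.exists_nat_subset_range
  calc ∑ i ∈ s, x i = ∑ i ∈ s, truncF x M i := sum_congr rfl fun i hi => by
        rw [truncF_apply, if_pos (mem_range.1 (hM hi))]
    _ ≤ partialMax (truncF x M) #s := le_partialMax (hbdd M) s
    _ ≤ b := hb ⟨_, rfl⟩

theorem tendsto_decRearr_truncF {x : ℕ → ℝ} (hx₀ : 0 ≤ x) (hx : BddAbove (Set.range x))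
    (k : ℕ) : Tendsto (fun m => decRearr (truncF x m) k) atTop (𝓝 (decRearr x k)) :=
  (tendsto_partialMax_truncF hx₀ hx (k + 1)).sub (tendsto_partialMax_truncF hx₀ hx k)

theorem exists_perm_antitone_comp {f : ℕ → ℝ} {m : ℕ} (hf₀ : 0 ≤ f)
    (hfm : ∀ i, m ≤ i → f i = 0) :
    ∃ π : Equiv.Perm ℕ, (∀ i, i < m ↔ π i < m) ∧ Antitone (f ∘ π) := by
  set g : Fin m → ℝᵒᵈ := fun k => OrderDual.toDual (f k)
  set σ := Tuple.sort g
  have hσ : Antitone fun k => f (σ k) := fun _ _ h => Tuple.monotone_sort g h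
  set π := σ.extendDomain Fin.equivSubtype
  have hlt : ∀ i (hi : i < m), π i = σ ⟨i, hi⟩ := fun i hi => by
    rw [Equiv.Perm.extendDomain_apply_subtype σ Fin.equivSubtype (b := i) hi]; rfl
  have hge : ∀ i, m ≤ i → π i = i := fun i hi =>
    Equiv.Perm.extendDomain_apply_not_subtype _ _ (not_lt.2 hi)
  refine ⟨π, fun i => ?_, fun i j hij => ?_⟩
  · rcases lt_or_ge i m with hi | hi
    · simp [hi, hlt i hi]
    · simp [not_lt.2 hi, hge i hi]
  · rcases lt_or_ge j m with hj | hj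
    · simp only [Function.comp_apply, hlt i (hij.trans_lt hj), hlt j hj]
      exact hσ (show (⟨i, _⟩ : Fin m) ≤ ⟨j, hj⟩ from hij)
    · simp only [Function.comp_apply, hge j hj, hfm j hj]
      exact hf₀ _

namespace SymmetricNorm

variable (Φ : SymmetricNorm)

noncomputable def toSeminorm : Seminorm ℝ (ℕ →₀ ℝ) :=
  Seminorm.of Φ.toFun Φ.add_le fun c ξ => by rw [Real.norm_eq_abs]; exact Φ.smul_eq c ξ

theorem toFun_congr_abs {ξ ζ : ℕ →₀ ℝ} (h : ∀ i, |ξ i| = |ζ i|) : Φ.toFun ξ = Φ.toFun ζ := by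
  rw [← Φ.abs_invariant ξ, ← Φ.abs_invariant ζ]
  congr 1
  ext i
  exact h i

theorem toFun_single (i : ℕ) (c : ℝ) : Φ.toFun (Finsupp.single i c) = |c| := by
  have h := Φ.perm_invariant (Equiv.swap 0 i) (Finsupp.single 0 c)
  rw [Finsupp.equivMapDomain_single, Equiv.swap_apply_left] at h
  rw [h, show Finsupp.single 0 c = c • Finsupp.single 0 1 by simp, Φ.smul_eq, Φ.norm_single,
    mul_one]

theorem toFun_convexComb_le {ξ ζ : ℕ →₀ ℝ} (h : Φ.toFun ζ = Φ.toFun ξ) {a b : ℝ} (ha : 0 ≤ a)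
    (hb : 0 ≤ b) (hab : a + b = 1) : Φ.toFun (a • ξ + b • ζ) ≤ Φ.toFun ξ :=
  calc Φ.toFun (a • ξ + b • ζ) ≤ Φ.toFun (a • ξ) + Φ.toFun (b • ζ) := Φ.add_le _ _
    _ = Φ.toFun ξ := by
      rw [Φ.smul_eq, Φ.smul_eq, h, abs_of_nonneg ha, abs_of_nonneg hb, ← add_mul, hab, one_mul]

theorem toFun_truncF_abs (f : ℕ → ℝ) (n : ℕ) :
    Φ.toFun (truncF (fun i => |f i|) n) = Φ.toFun (truncF f n) :=
  Φ.toFun_congr_abs fun i => by simp only [truncF_apply]; split_ifs <;> simp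

theorem toFun_truncF_comp_perm (f : ℕ → ℝ) {n : ℕ} (π : Equiv.Perm ℕ)
    (hπ : ∀ i, i < n ↔ π i < n) : Φ.toFun (truncF (f ∘ π) n) = Φ.toFun (truncF f n) := by
  have : truncF (f ∘ π) n = Finsupp.equivMapDomain π.symm (truncF f n) := by
    ext i
    simp only [Finsupp.equivMapDomain_apply, Equiv.symm_symm, truncF_apply, Function.comp_apply,
      hπ i]
  rw [this, Φ.perm_invariant]

/-- Zeroing an entry gives the average of the vector and its copy with that entry negated. -/
theorem monotone_toFun_truncF (f : ℕ → ℝ) : Monotone fun n => Φ.toFun (truncF f n) := by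
  refine monotone_nat_of_le_succ fun n => ?_
  set ξ := truncF f n
  set ζ := Finsupp.single n (f n)
  have hsucc : truncF f (n + 1) = ξ + ζ := sum_range_succ _ _
  have hflip : Φ.toFun (ξ - ζ) = Φ.toFun (ξ + ζ) := Φ.toFun_congr_abs fun i => by
    rcases eq_or_ne i n with rfl | hi
    · simp [ξ, ζ, truncF_apply]
    · simp [ζ, hi.symm]
  calc Φ.toFun ξ = Φ.toFun ((1 / 2 : ℝ) • (ξ + ζ) + (1 / 2 : ℝ) • (ξ - ζ)) := by
        congr 1; module
    _ ≤ Φ.toFun (truncF f (n + 1)) := by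
        rw [hsucc]; exact Φ.toFun_convexComb_le hflip (by norm_num) (by norm_num) (by norm_num)

theorem abs_toFun_truncF_sub_le (f g : ℕ → ℝ) (n : ℕ) :
    |Φ.toFun (truncF f n) - Φ.toFun (truncF g n)| ≤ ∑ i ∈ range n, |f i - g i| :=
  calc |Φ.toFun (truncF f n) - Φ.toFun (truncF g n)| ≤ Φ.toFun (truncF (f - g) n) := by
        rw [truncF_sub]; exact abs_sub_map_le_sub Φ.toSeminorm _ _
    _ ≤ ∑ i ∈ range n, Φ.toFun (Finsupp.single i (f i - g i)) :=
        le_sum_of_subadditive _ (map_zero Φ.toSeminorm).le Φ.add_le _ _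
    _ = ∑ i ∈ range n, |f i - g i| := by simp only [toFun_single]

theorem tendsto_toFun_truncF {ι : Type*} {l : Filter ι} {F : ι → ℕ → ℝ} {f : ℕ → ℝ} {n : ℕ}
    (hF : ∀ i < n, Tendsto (fun a => F a i) l (𝓝 (f i))) :
    Tendsto (fun a => Φ.toFun (truncF (F a) n)) l (𝓝 (Φ.toFun (truncF f n))) := by
  rw [tendsto_iff_dist_tendsto_zero]
  refine squeeze_zero (fun _ => dist_nonneg) (fun a => Φ.abs_toFun_truncF_sub_le (F a) f n) ?_
  rw [← sum_const_zero (s := range n)]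
  refine tendsto_finsetSum _ fun i hi => ?_
  simpa [← Real.dist_eq, ← tendsto_iff_dist_tendsto_zero] using hF i (mem_range.1 hi)

theorem tendsto_toFun_truncF_ext {f : ℕ → ℝ}
    (hf : BddAbove (Set.range fun n => Φ.toFun (truncF f n))) :
    Tendsto (fun n => Φ.toFun (truncF f n)) atTop (𝓝 (Φ.ext f)) := by
  have h := tendsto_atTop_ciSup (Φ.monotone_toFun_truncF f) hf
  rwa [SymmetricNorm.ext, h.limUnder_eq]

theorem toFun_truncF_le_ext {f : ℕ → ℝ} (hf : BddAbove (Set.range fun n => Φ.toFun (truncF f n)))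
    (n : ℕ) : Φ.toFun (truncF f n) ≤ Φ.ext f :=
  (Φ.monotone_toFun_truncF f).ge_of_tendsto (Φ.tendsto_toFun_truncF_ext hf) n

theorem ext_le_of_forall_toFun_truncF_le {f : ℕ → ℝ} {c : ℝ} (h : ∀ n, Φ.toFun (truncF f n) ≤ c) :
    Φ.ext f ≤ c :=
  le_of_tendsto' (Φ.tendsto_toFun_truncF_ext ⟨c, Set.forall_mem_range.2 h⟩) h

/-- `g` is a convex combination of `f` and `f ∘ swap i j`. -/
theorem toFun_truncF_le_of_exchange {f g : ℕ → ℝ} {n i j : ℕ} (hi : i < n) (hj : j < n)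
    (hg : ∀ k, k ≠ i → k ≠ j → g k = f k) (hsum : g i + g j = f i + f j)
    (hgi : g i ∈ Set.uIcc (f i) (f j)) : Φ.toFun (truncF g n) ≤ Φ.toFun (truncF f n) := by
  obtain ⟨a, b, ha, hb, hab, hgi⟩ := (segment_eq_uIcc (f i) (f j)).symm ▸ hgi
  have hcomb : g = a • f + b • (f ∘ Equiv.swap i j) := by
    ext k
    simp only [Pi.add_apply, Pi.smul_apply, Function.comp_apply, smul_eq_mul] at hgi ⊢
    rcases eq_or_ne k i with rfl | hki
    · rw [Equiv.swap_apply_left, hgi]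
    rcases eq_or_ne k j with rfl | hkj
    · rw [Equiv.swap_apply_right]; linear_combination hsum + hgi - (f i + f k) * hab
    · rw [Equiv.swap_apply_of_ne_of_ne hki hkj, hg k hki hkj, ← add_mul, hab, one_mul]
  have hswap : ∀ k, k < n ↔ Equiv.swap i j k < n := fun k => by
    rw [Equiv.swap_apply_def]; split_ifs <;> omega
  rw [hcomb, truncF_add, truncF_smul, truncF_smul]
  exact Φ.toFun_convexComb_le (Φ.toFun_truncF_comp_perm f _ hswap) ha hb hab

/-- Selection sort: the entries of `z ∘ τ` are put in place from the front, each step being an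
exchange as in `toFun_truncF_le_of_exchange`. -/
theorem toFun_truncF_sub_le_sub_comp_perm {x z : ℕ → ℝ} (hx : Antitone x) (hz : Antitone z)
    {n : ℕ} (τ : Equiv.Perm ℕ) (hτ : ∀ i, i < n ↔ τ i < n) :
    Φ.toFun (truncF (x - z) n) ≤ Φ.toFun (truncF (x - z ∘ τ) n) := by
  suffices h : ∀ j ≤ n, ∀ τ : Equiv.Perm ℕ, (∀ i, i < n ↔ τ i < n) → (∀ i < j, τ i = i) →
      Φ.toFun (truncF (x - z) n) ≤ Φ.toFun (truncF (x - z ∘ τ) n) from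
    h 0 n.zero_le τ hτ fun i hi => absurd hi i.not_lt_zero
  intro j hj
  induction hj using Nat.decreasingInduction with
  | self =>
    intro τ _ hfix
    rw [truncF_congr (g := x - z ∘ τ) fun i hi => by simp [hfix i hi]]
  | of_succ j hj ih =>
    intro τ hτ hfix
    set k := τ.symm j
    have hτk : τ k = j := τ.apply_symm_apply j
    have hjk : j ≤ k := not_lt.1 fun hkj => hkj.ne ((hfix k hkj).symm.trans hτk)
    have hjτ : j ≤ τ j := not_lt.1 fun h => h.ne (τ.injective (hfix _ h))
    have hkn : k < n := (hτ k).2 (hτk ▸ hj)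
    have hswap : ∀ i, i < n ↔ Equiv.swap j k i < n := fun i => by
      rw [Equiv.swap_apply_def]; split_ifs <;> omega
    refine (ih (τ * Equiv.swap j k) (fun i => (hswap i).trans (hτ _)) fun i hi => ?_).trans ?_
    · rcases Nat.lt_succ_iff_lt_or_eq.1 hi with hi | rfl
      · rw [Equiv.Perm.mul_apply, Equiv.swap_apply_of_ne_of_ne hi.ne (by omega), hfix i hi]
      · rw [Equiv.Perm.mul_apply, Equiv.swap_apply_left, hτk]
    refine Φ.toFun_truncF_le_of_exchange hj hkn (fun l hlj hlk => ?_) ?_ ?_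
    · simp [Equiv.swap_apply_of_ne_of_ne hlj hlk]
    · simp only [Pi.sub_apply, Function.comp_apply, Equiv.Perm.mul_apply, Equiv.swap_apply_left,
        Equiv.swap_apply_right, hτk]
      ring
    · simp only [Pi.sub_apply, Function.comp_apply, Equiv.Perm.mul_apply, Equiv.swap_apply_left,
        hτk]
      exact Set.Icc_subset_uIcc' ⟨by linarith [hx hjk], by linarith [hz hjτ]⟩

theorem toFun_truncF_abs_sub_decRearr_truncF_le {x y : ℕ → ℝ} (hx₀ : 0 ≤ x) (hy₀ : 0 ≤ y)
    (m : ℕ) :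
    Φ.toFun (truncF (fun i => |decRearr (truncF x m) i - decRearr (truncF y m) i|) m) ≤
      Φ.toFun (truncF (fun i => |x i - y i|) m) := by
  have hnonneg : ∀ {f : ℕ → ℝ}, 0 ≤ f → 0 ≤ ⇑(truncF f m) := fun hf i => by
    rw [truncF_apply]; split_ifs; exacts [hf i, le_rfl]
  have hvanish : ∀ f i, m ≤ i → truncF f m i = 0 := fun f i hi => by
    rw [truncF_apply, if_neg (not_lt.2 hi)]
  obtain ⟨π, hπ, hxπ⟩ := exists_perm_antitone_comp (hnonneg hx₀) (hvanish x)
  obtain ⟨σ, hσ, hyσ⟩ := exists_perm_antitone_comp (hnonneg hy₀) (hvanish y)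
  rw [decRearr_eq_comp_of_antitone hxπ, decRearr_eq_comp_of_antitone hyσ, Φ.toFun_truncF_abs,
    Φ.toFun_truncF_abs]
  calc Φ.toFun (truncF (truncF x m ∘ π - truncF y m ∘ σ) m)
      ≤ Φ.toFun (truncF (truncF x m ∘ π - (truncF y m ∘ σ) ∘ (σ.symm * π)) m) :=
        Φ.toFun_truncF_sub_le_sub_comp_perm hxπ hyσ _ fun i => by
          rw [Equiv.Perm.mul_apply, hσ (σ.symm (π i)), Equiv.apply_symm_apply, hπ]
    _ = Φ.toFun (truncF ((x - y) ∘ π) m) := by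
        congr 1
        refine truncF_congr fun i hi => ?_
        simp [truncF_apply, (hπ i).1 hi]
    _ = Φ.toFun (truncF (x - y) m) := Φ.toFun_truncF_comp_perm _ π hπ

theorem bddAbove_toFun_truncF_abs_sub {ξ η : ℕ → ℝ}
    (hξ : BddAbove (Set.range fun n => Φ.toFun (truncF ξ n)))
    (hη : BddAbove (Set.range fun n => Φ.toFun (truncF η n))) :
    BddAbove (Set.range fun n => Φ.toFun (truncF (fun i => |ξ i - η i|) n)) := by
  obtain ⟨A, hA⟩ := hξ
  obtain ⟨B, hB⟩ := hη
  refine ⟨A + B, Set.forall_mem_range.2 fun n => ?_⟩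
  change Φ.toFun (truncF (fun i => |(ξ - η) i|) n) ≤ A + B
  rw [Φ.toFun_truncF_abs, truncF_sub]
  exact (map_sub_le_add Φ.toSeminorm _ _).trans (add_le_add (hA ⟨n, rfl⟩) (hB ⟨n, rfl⟩))

end SymmetricNorm

theorem MemLPhi.bddAbove_toFun_truncF {Φ : SymmetricNorm} {ξ : ℕ → ℝ} (hξ : MemLPhi Φ ξ) :
    BddAbove (Set.range fun n => Φ.toFun (truncF ξ n)) :=
  let ⟨_, _, hL⟩ := hξ
  hL.bddAbove_range

theorem decRearr_lipschitz_general (Φ : SymmetricNorm)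
    (ξ η : ℕ → ℝ) (hξ : MemLPhiPlus Φ ξ) (hη : MemLPhiPlus Φ η) :
    Φ.ext (fun i => |decRearr ξ i - decRearr η i|) ≤ Φ.ext (fun i => |ξ i - η i|) := by
  obtain ⟨hξ₀, hξ⟩ := hξ
  obtain ⟨hη₀, hη⟩ := hη
  have hbdd := Φ.bddAbove_toFun_truncF_abs_sub hξ.bddAbove_toFun_truncF hη.bddAbove_toFun_truncF
  refine Φ.ext_le_of_forall_toFun_truncF_le fun n => ?_
  have hlim : Tendsto
      (fun m => Φ.toFun (truncF (fun i => |decRearr (truncF ξ m) i - decRearr (truncF η m) i|) n))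
      atTop (𝓝 (Φ.toFun (truncF (fun i => |decRearr ξ i - decRearr η i|) n))) :=
    Φ.tendsto_toFun_truncF fun i _ =>
      ((tendsto_decRearr_truncF hξ₀ hξ.1.bddAbove_range i).sub
        (tendsto_decRearr_truncF hη₀ hη.1.bddAbove_range i)).abs
  refine le_of_tendsto hlim (eventually_atTop.2 ⟨n, fun m hm => ?_⟩)
  calc _ ≤ Φ.toFun (truncF (fun i => |decRearr (truncF ξ m) i - decRearr (truncF η m) i|) m) :=
        Φ.monotone_toFun_truncF _ hm
    _ ≤ Φ.toFun (truncF (fun i => |ξ i - η i|) m) :=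
        Φ.toFun_truncF_abs_sub_decRearr_truncF_le hξ₀ hη₀ m
    _ ≤ _ := Φ.toFun_truncF_le_ext hbdd m

/-- For a regular symmetric norm `Φ`, the nonincreasing rearrangement map is
`1`-Lipschitz on `ℓ_Φ^+`: `Φ(|ξ^↓ - η^↓|) ≤ Φ(|ξ - η|)`. -/
theorem decRearr_lipschitz (Φ : SymmetricNorm) (hΦ : Φ.Regular)
    (ξ η : ℕ → ℝ) (hξ : MemLPhiPlus Φ ξ) (hη : MemLPhiPlus Φ η) :
    Φ.ext (fun i => |decRearr ξ i - decRearr η i|) ≤ Φ.ext (fun i => |ξ i - η i|) :=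
  decRearr_lipschitz_general Φ ξ η hξ hη
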